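/- Let k be a positive integer and let 𝓕 = {P ∈ ℚ[x] : deg P = k}. Then the field ℚ(𝓡_𝓕), the subfield of ℚ̄ generated over ℚ by all roots of all rational polynomials of degree exactly k, has property P: there exists α ∈ ℚ̄ such that αⁿ ∉ ℚ(𝓡_𝓕) for all integers n ≥ 1. -/

import Mathlib

/-!
Take a prime `p > k` and `β = 2^{1/p}`, and let `α = 1 + β`. Every finite subextension of the
field generated by roots of degree-`k` polynomials is a tower of simple extensions of degree at
most `k`, so its degree has no prime factor `p`. On the other hand `ℚ(αⁿ) ⊆ ℚ(β)` has degree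
dividing `p`, and degree `1` is impossible: expanding `(1 + β)ⁿ` in the basis
`1, β, …, β^{p-1}` (using `β^p = 2 > 0`) gives a positive coefficient at `β`.
-/

open Polynomial IntermediateField Module

theorem Rat.pow_ne_prime {ℓ n : ℕ} (hℓ : ℓ.Prime) (hn : n ≠ 1) (b : ℚ) : b ^ n ≠ ℓ := by
  have := Fact.mk hℓ
  intro h
  have hval := congrArg (padicValRat ℓ) h
  rw [padicValRat.pow, padicValRat.self hℓ.one_lt] at hval
  exact hn (Int.eq_one_of_mul_eq_one_right (Int.natCast_nonneg n)
    (by exact_mod_cast hval) |> Int.ofNat_inj.mp)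

theorem minpoly_rat_eq_X_pow_sub_C {K : Type*} [Field K] [CharZero K] {ℓ p : ℕ}
    (hℓ : ℓ.Prime) (hp : p.Prime) {β : K} (hβ : β ^ p = ℓ) :
    minpoly ℚ β = X ^ p - C (ℓ : ℚ) := by
  refine (minpoly.eq_of_irreducible_of_monic ?_ ?_ (monic_X_pow_sub_C _ hp.ne_zero)).symm
  · exact X_pow_sub_C_irreducible_of_prime hp (Rat.pow_ne_prime hℓ hp.ne_one)
  · simp [hβ]

section PowersOfOneAddRoot

variable {F A : Type*}

theorem pow_eq_smul_pow_mod [CommSemiring F] [Semiring A] [Algebra F A]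
    {β : A} {c : F} {p : ℕ} (hβ : β ^ p = algebraMap F A c) (j : ℕ) :
    β ^ j = c ^ (j / p) • β ^ (j % p) := by
  conv_lhs => rw [← Nat.div_add_mod j p]
  rw [pow_add, pow_mul, hβ, ← map_pow, ← Algebra.smul_def]

theorem one_add_pow_eq_sum_smul_pow [CommSemiring F] [Semiring A] [Algebra F A]
    {β : A} {c : F} {p : ℕ} [NeZero p] (hβ : β ^ p = algebraMap F A c) (n : ℕ) :
    (1 + β) ^ n = ∑ i : Fin p,
      (∑ j ∈ (Finset.range (n + 1)).filter (fun j => Fin.ofNat p j = i),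
        (n.choose j : F) * c ^ (j / p)) • β ^ (i : ℕ) := by
  simp_rw [Finset.sum_smul]
  calc (1 + β) ^ n
      = ∑ j ∈ Finset.range (n + 1), ((n.choose j : F) * c ^ (j / p)) • β ^ (j % p) := by
        rw [add_comm, (Commute.one_right β).add_pow]
        refine Finset.sum_congr rfl fun j _ => ?_
        rw [mul_smul, ← pow_eq_smul_pow_mod hβ, one_pow, mul_one, Nat.cast_smul_eq_nsmul,
          nsmul_eq_mul, Nat.cast_comm]
    _ = _ := by
        rw [← Finset.sum_fiberwise (Finset.range (n + 1)) (Fin.ofNat p)]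
        refine Finset.sum_congr rfl fun i _ => Finset.sum_congr rfl fun j hj => ?_
        rw [← (Finset.mem_filter.mp hj).2, Fin.val_ofNat]

theorem one_add_pow_ne_algebraMap [Field F] [LinearOrder F] [IsStrictOrderedRing F]
    [Ring A] [Algebra F A] {β : A} {c : F} {p : ℕ} (hp : 2 ≤ p) (hc : 0 ≤ c)
    (hβ : β ^ p = algebraMap F A c) (hli : LinearIndependent F fun i : Fin p => β ^ (i : ℕ))
    {n : ℕ} (hn : n ≠ 0) (q : F) : (1 + β) ^ n ≠ algebraMap F A q := by
  have : NeZero p := ⟨by omega⟩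
  intro h
  set a : Fin p → F := fun i => ∑ j ∈ (Finset.range (n + 1)).filter (fun j => Fin.ofNat p j = i),
    (n.choose j : F) * c ^ (j / p) with ha
  have hrel : ∑ i, (a i - Pi.single (M := fun _ => F) 0 q i) • β ^ (i : ℕ) = 0 := by
    simp only [sub_smul, Finset.sum_sub_distrib, ha, ← one_add_pow_eq_sum_smul_pow hβ, h]
    simp [Pi.single_apply, Algebra.algebraMap_eq_smul_one]
  have ha1 : a 1 = 0 := by
    have hp1 : p ≠ 1 := by omega
    simpa [Pi.single_apply, hp1] using Fintype.linearIndependent_iff.mp hli _ hrel 1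
  have hterm : (n.choose 1 : F) * c ^ (1 / p) ≤ a 1 :=
    Finset.single_le_sum (f := fun j => (n.choose j : F) * c ^ (j / p))
      (fun j _ => by positivity) (Finset.mem_filter.mpr ⟨Finset.mem_range.mpr (by omega), rfl⟩)
  have hpos : (0 : F) < n.choose 1 * c ^ (1 / p) := by
    rw [Nat.div_eq_of_lt (by omega)]
    simp only [Nat.choose_one_right, pow_zero, mul_one, Nat.cast_pos]
    omega
  linarith

end PowersOfOneAddRoot

theorem prime_le_of_dvd_finrank_adjoin_finset {F E : Type*} [Field F] [Field E] [Algebra F E]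
    {k : ℕ} (t : Finset E) (ht : ∀ x ∈ t, ∃ P : F[X], P ≠ 0 ∧ P.natDegree ≤ k ∧ aeval x P = 0)
    {r : ℕ} (hr : r.Prime) (hdvd : r ∣ finrank F (adjoin F (t : Set E))) : r ≤ k := by
  refine induction_on_adjoin_finset t (fun K => r ∣ finrank F K → r ≤ k) ?_ ?_ hdvd
  · intro h
    rw [IntermediateField.finrank_bot] at h
    exact absurd (Nat.eq_one_of_dvd_one h) hr.ne_one
  · intro K x hx ih h
    obtain ⟨P, hP0, hPk, hPx⟩ := ht x hx
    have hPK : aeval x (P.map (algebraMap F K)) = 0 := by rw [aeval_map_algebraMap, hPx]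
    have hPK0 : P.map (algebraMap F K) ≠ 0 := Polynomial.map_ne_zero hP0
    have hxK : IsIntegral K x := IsAlgebraic.isIntegral ⟨_, hPK0, hPK⟩
    change r ∣ finrank F K⟮x⟯ at h
    rw [← Module.finrank_mul_finrank F K K⟮x⟯] at h
    rcases hr.dvd_mul.mp h with hK | hKx
    · exact ih hK
    calc r ≤ finrank K K⟮x⟯ := Nat.le_of_dvd (adjoin.finrank hxK ▸ minpoly.natDegree_pos hxK) hKx
      _ = (minpoly K x).natDegree := adjoin.finrank hxK
      _ ≤ (P.map (algebraMap F K)).natDegree :=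
        natDegree_le_natDegree (minpoly.degree_le_of_ne_zero K x hPK0 hPK)
      _ ≤ k := by rwa [natDegree_map]

/-- Let `k ≥ 1` and `𝓕 = {P ∈ ℚ[x] : deg P = k}`. Then the subfield of `ℚ̄` generated
over `ℚ` by all roots of all rational polynomials of degree exactly `k` has property P. -/
theorem stmt_4 (k : ℕ) (hk : 1 ≤ k) :
    ∃ α : AlgebraicClosure ℚ, ∀ n : ℕ, 1 ≤ n →
      α ^ n ∉ IntermediateField.adjoin ℚ
        {x : AlgebraicClosure ℚ | ∃ P : ℚ[X], P.natDegree = k ∧ aeval x P = 0} := by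
  obtain ⟨p, hkp, hp⟩ := Nat.exists_infinite_primes (k + 1)
  obtain ⟨β, hβ⟩ := IsAlgClosed.exists_pow_nat_eq (2 : AlgebraicClosure ℚ) hp.pos
  have hminβ := minpoly_rat_eq_X_pow_sub_C (β := β) Nat.prime_two hp (by exact_mod_cast hβ)
  have hdegβ : (minpoly ℚ β).natDegree = p := by rw [hminβ, natDegree_X_pow_sub_C]
  have hβint : IsIntegral ℚ β :=
    minpoly.ne_zero_iff.mp (by rw [hminβ]; exact X_pow_sub_C_ne_zero hp.pos _)
  refine ⟨1 + β, fun n hn hmem => ?_⟩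
  obtain ⟨T, hTroots, hT⟩ := exists_finset_of_mem_adjoin hmem
  have hdvdT : finrank ℚ ℚ⟮(1 + β) ^ n⟯ ∣ finrank ℚ (adjoin ℚ (T : Set (AlgebraicClosure ℚ))) :=
    finrank_dvd_of_le_right (adjoin_simple_le_iff.mpr hT)
  have hdvdp : finrank ℚ ℚ⟮(1 + β) ^ n⟯ ∣ p := by
    rw [← hdegβ, ← adjoin.finrank hβint]
    exact finrank_dvd_of_le_right <| adjoin_simple_le_iff.mpr <|
      pow_mem (add_mem (one_mem _) (mem_adjoin_simple_self ℚ β)) n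
  rcases hp.eq_one_or_self_of_dvd _ hdvdp with hrat | hfull
  · obtain ⟨q, hq⟩ := mem_bot.mp (finrank_adjoin_simple_eq_one_iff.mp hrat)
    have hli := linearIndependent_pow (K := ℚ) β
    rw [hdegβ] at hli
    exact one_add_pow_ne_algebraMap hp.two_le zero_le_two (by simpa using hβ) hli (by omega) q
      hq.symm
  · have hpk : p ≤ k := prime_le_of_dvd_finrank_adjoin_finset T (fun x hx => ?_) hp (hfull ▸ hdvdT)
    · omega
    obtain ⟨P, hPk, hPx⟩ := hTroots hx
    exact ⟨P, by rintro rfl; rw [natDegree_zero] at hPk; omega, hPk.le, hPx⟩
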